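/- arXiv:2002.10685 — 3 statements merged into one kernel-verified Lean document; each statement's English description precedes it below -/
import Mathlib

section
/- Define I_{k₁,k₂}(h) = ∫_L x^{k₁} y^{k₂} dy, where L is the clockwise first-quadrant quarter arc of x² + y² = 2h (h > 0). Then for every pair (k₁, k₂) of non-negative integers there exist real constants γ₁, γ₂ (independent of h) such that: if k₁ + k₂ is even, I_{k₁,k₂}(h) = γ₁ h^{(k₁+k₂)/2} I_{0,0}(h) + γ₂ h^{(k₁+k₂−2)/2} I_{1,1}(h) for all h > 0 (with the second term absent when k₁+k₂ = 0); and if k₁ + k₂ is odd, I_{k₁,k₂}(h) = γ₁ h^{(k₁+k₂−1)/2} I_{0,1}(h) + γ₂ h^{(k₁+k₂−1)/2} I_{1,0}(h) for all h > 0. -/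
open Real

lemma factor_key (k₁ k₂ : ℕ) (h : ℝ) :
    (∫ t in (0:ℝ)..(π/2),
        (Real.sqrt (2*h) * Real.sin t) ^ k₁ * (Real.sqrt (2*h) * Real.cos t) ^ k₂ *
          (-(Real.sqrt (2*h) * Real.sin t)))
    = -(Real.sqrt (2*h)) ^ (k₁ + k₂ + 1) *
        ∫ t in (0:ℝ)..(π/2), Real.sin t ^ (k₁+1) * Real.cos t ^ k₂ := by
  rw [← intervalIntegral.integral_const_mul]
  apply intervalIntegral.integral_congr
  intro t _
  ring

/-- With `I_{k₁,k₂}(h) = ∫_L x^{k₁} y^{k₂} dy` on the clockwise first-quadrant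
quarter arc of `x² + y² = 2h`, for every `(k₁,k₂)` there exist constants `γ₁ γ₂` (independent
of `h`) such that, for all `h > 0`: if `k₁+k₂` is even then
`I_{k₁,k₂}(h) = γ₁ h^{(k₁+k₂)/2} I₀₀(h) + γ₂ h^{(k₁+k₂−2)/2} I₁₁(h)` (second term absent when
`k₁+k₂ = 0`, i.e. `γ₂ = 0`), and if `k₁+k₂` is odd then
`I_{k₁,k₂}(h) = γ₁ h^{(k₁+k₂−1)/2} I₀₁(h) + γ₂ h^{(k₁+k₂−1)/2} I₁₀(h)`. -/
theorem I_structure_even_odd (I : ℕ → ℕ → ℝ → ℝ)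
    (hI : ∀ (k₁ k₂ : ℕ) (h : ℝ), I k₁ k₂ h =
      ∫ t in (0:ℝ)..(π/2),
        (Real.sqrt (2*h) * Real.sin t) ^ k₁ * (Real.sqrt (2*h) * Real.cos t) ^ k₂ *
          (-(Real.sqrt (2*h) * Real.sin t)))
    (k₁ k₂ : ℕ) :
    ∃ γ₁ γ₂ : ℝ,
      (Even (k₁ + k₂) →
        (k₁ + k₂ = 0 → γ₂ = 0) ∧
        ∀ h : ℝ, 0 < h →
          I k₁ k₂ h = γ₁ * h ^ ((k₁ + k₂)/2) * I 0 0 h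
            + γ₂ * h ^ ((k₁ + k₂ - 2)/2) * I 1 1 h) ∧
      (¬ Even (k₁ + k₂) →
        ∀ h : ℝ, 0 < h →
          I k₁ k₂ h = γ₁ * h ^ ((k₁ + k₂ - 1)/2) * I 0 1 h
            + γ₂ * h ^ ((k₁ + k₂ - 1)/2) * I 1 0 h) := by
  set C : ℝ := ∫ t in (0:ℝ)..(π/2), Real.sin t ^ (k₁+1) * Real.cos t ^ k₂ with hC
  by_cases hpar : Even (k₁ + k₂)
  · obtain ⟨m, hm⟩ := hpar
    refine ⟨2 ^ m * C, 0, fun _ => ⟨fun _ => rfl, fun h hh => ?_⟩, fun hc => absurd ⟨m, hm⟩ hc⟩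
    have hs : Real.sqrt (2*h) ^ 2 = 2 * h := Real.sq_sqrt (by linarith)
    have hI00 : I 0 0 h = -Real.sqrt (2*h) := by
      rw [hI, factor_key]
      simp [integral_sin]
    have hdiv : (k₁ + k₂) / 2 = m := by omega
    rw [hI, factor_key, ← hC, hI00, hdiv]
    have hpow : Real.sqrt (2*h) ^ (k₁ + k₂ + 1)
        = (2*h) ^ m * Real.sqrt (2*h) := by
      rw [hm, show m + m + 1 = 2 * m + 1 by ring, pow_succ, pow_mul, hs]
    rw [hpow, mul_pow]
    ring
  · rw [Nat.not_even_iff_odd] at hpar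
    obtain ⟨m, hm⟩ := hpar
    refine ⟨2 ^ (m+1) * C, 0, fun hc => absurd hc (by rw [Nat.not_even_iff_odd]; exact ⟨m, hm⟩),
      fun _ h hh => ?_⟩
    have hs : Real.sqrt (2*h) ^ 2 = 2 * h := Real.sq_sqrt (by linarith)
    have hI01 : I 0 1 h = -h := by
      rw [hI, factor_key]
      have : (∫ t in (0:ℝ)..(π/2), Real.sin t ^ (0+1) * Real.cos t ^ 1)
          = ∫ t in (0:ℝ)..(π/2), Real.sin t * Real.cos t := by norm_num
      rw [this, integral_sin_mul_cos₁, Real.sin_pi_div_two, Real.sin_zero,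
        show (0+1+1)=2 from rfl, hs]
      ring
    have hdiv : (k₁ + k₂ - 1) / 2 = m := by omega
    rw [hI, factor_key, ← hC, hI01, hdiv]
    have hpow : Real.sqrt (2*h) ^ (k₁ + k₂ + 1) = (2*h) ^ (m+1) := by
      rw [hm, show 2*m + 1 + 1 = 2 * (m+1) by ring, pow_mul, hs]
    rw [hpow, mul_pow]
    ring
end

section
/- Let p, q : ℝ² → ℝ be C¹ functions and for h in an open interval J let a₁(h) > 0 and a₂(h) > 0 be C¹ functions such that the clockwise arc Γ_h = {(x,y) : x² + y² = 2h, x ≥ 0, y ≥ 0} runs from A₁(h) = (0, a₁(h)) to A₂(h) = (a₂(h), 0), with a₁(h) = a₂(h) = √(2h). Define M₁(h) = ∫_{Γ_h} q dx − p dy. Then M₁ is differentiable in h and M₁'(h) = ∫_{Γ_h} (p_x + q_y) dt + p(0, a₁(h)) a₁'(h) + q(a₂(h), 0) a₂'(h), where dt denotes integration with respect to the time parametrization ẋ = y, ẏ = −x of Γ_h. -/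
open Real

/-!
Write `M₁(h) = F(√(2h))` with `F(r) = ∫₀^{π/2} f(r, t) dt`, where `f(r, t)` is the integrand
of `q dx − p dy` along `γ_r(t) = (r sin t, r cos t)`. Differentiating `F` under the integral
sign, the radial derivative of the integrand splits as
`∂_r f = r (p_x + q_y)(γ_r) + ∂_t G` with `G(r, t) = q(γ_r(t)) sin t − p(γ_r(t)) cos t`,
so `F'(r) = r ∫ (p_x + q_y) + G(r, π/2) − G(r, 0) = r ∫ (p_x + q_y) + q(r, 0) + p(0, r)`.
The chain rule with `d√(2h)/dh = 1/√(2h) = a₁'(h) = a₂'(h)` gives the formula.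
-/

theorem hasDerivAt_intervalIntegral_of_continuous_deriv {E : Type*} [NormedAddCommGroup E]
    [NormedSpace ℝ E] {F F' : ℝ → ℝ → E} {a b : ℝ} (hF : ∀ x, Continuous (F x))
    (hF' : Continuous (Function.uncurry F')) (hderiv : ∀ x t, HasDerivAt (F · t) (F' x t) x)
    (x₀ : ℝ) : HasDerivAt (fun x => ∫ t in a..b, F x t) (∫ t in a..b, F' x₀ t) x₀ := by
  obtain ⟨C, hC⟩ := ((isCompact_closedBall x₀ 1).prod (isCompact_uIcc (a := a) (b := b))
    ).exists_bound_of_continuousOn hF'.continuousOn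
  have hbound : ∀ᵐ t, t ∈ Set.uIoc a b → ∀ x ∈ Metric.ball x₀ 1, ‖F' x t‖ ≤ C :=
    MeasureTheory.ae_of_all _ fun t ht x hx =>
      hC (x, t) ⟨Metric.ball_subset_closedBall hx, Set.uIoc_subset_uIcc ht⟩
  exact (intervalIntegral.hasDerivAt_integral_of_dominated_loc_of_deriv_le
    (Metric.ball_mem_nhds x₀ one_pos) (.of_forall fun x => (hF x).aestronglyMeasurable)
    ((hF x₀).intervalIntegrable a b)
    (hF'.comp (Continuous.prodMk_right x₀)).aestronglyMeasurable hbound intervalIntegrable_const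
    (MeasureTheory.ae_of_all _ fun t _ x _ => hderiv x t)).2

theorem ContinuousLinearMap.map_pair {F : Type*} [NormedAddCommGroup F] [NormedSpace ℝ F]
    (L : ℝ × ℝ →L[ℝ] F) (a b : ℝ) : L (a, b) = a • L (1, 0) + b • L (0, 1) := by
  rw [← map_smul, ← map_smul, ← map_add]
  simp

lemma hasDerivAt_sqrt_two_mul {x : ℝ} (hx : 0 < x) :
    HasDerivAt (fun x => √(2 * x)) (√(2 * x))⁻¹ x :=
  (((hasDerivAt_id' x).const_mul 2).sqrt (by positivity)).congr_deriv (by field_simp)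

noncomputable section

def quarterArc (r t : ℝ) : ℝ × ℝ := (r * sin t, r * cos t)

def arcIntegrand (p q : ℝ × ℝ → ℝ) (r t : ℝ) : ℝ :=
  q (quarterArc r t) * (r * cos t) - p (quarterArc r t) * (-(r * sin t))

def arcIntegrandRadialDeriv (p q : ℝ × ℝ → ℝ) (r t : ℝ) : ℝ :=
  (fderiv ℝ q (quarterArc r t) (sin t, cos t) * (r * cos t) + q (quarterArc r t) * cos t)
    - (fderiv ℝ p (quarterArc r t) (sin t, cos t) * (-(r * sin t))
      + p (quarterArc r t) * -sin t)

def arcEndpointTerm (p q : ℝ × ℝ → ℝ) (r t : ℝ) : ℝ :=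
  q (quarterArc r t) * sin t - p (quarterArc r t) * cos t

def divergence (p q : ℝ × ℝ → ℝ) (z : ℝ × ℝ) : ℝ :=
  fderiv ℝ p z (1, 0) + fderiv ℝ q z (0, 1)

lemma hasDerivAt_quarterArc_radius (r t : ℝ) :
    HasDerivAt (quarterArc · t) (sin t, cos t) r := by
  simpa [quarterArc] using
    ((hasDerivAt_id r).mul_const (sin t)).prodMk ((hasDerivAt_id r).mul_const (cos t))

lemma hasDerivAt_quarterArc_angle (r t : ℝ) :
    HasDerivAt (quarterArc r) (r * cos t, -(r * sin t)) t :=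
  (((hasDerivAt_sin t).const_mul r).prodMk ((hasDerivAt_cos t).const_mul r)).congr_deriv
    (by simp)

lemma continuous_quarterArc : Continuous (Function.uncurry quarterArc) := by
  unfold quarterArc Function.uncurry
  fun_prop

section

variable {p q : ℝ × ℝ → ℝ} (hp : ContDiff ℝ 1 p) (hq : ContDiff ℝ 1 q)
include hp hq

lemma hasDerivAt_arcIntegrand_radius (r t : ℝ) :
    HasDerivAt (arcIntegrand p q · t) (arcIntegrandRadialDeriv p q r t) r := by
  have hγ := hasDerivAt_quarterArc_radius r t
  have hqγ := (hq.differentiable one_ne_zero _).hasFDerivAt.comp_hasDerivAt r hγ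
  have hpγ := (hp.differentiable one_ne_zero _).hasFDerivAt.comp_hasDerivAt r hγ
  exact ((hqγ.mul ((hasDerivAt_id r).mul_const (cos t))).sub
    (hpγ.mul ((hasDerivAt_id r).mul_const (sin t)).neg)).congr_deriv
      (by simp [arcIntegrandRadialDeriv])

lemma hasDerivAt_arcEndpointTerm_angle (r t : ℝ) :
    HasDerivAt (arcEndpointTerm p q r)
      (arcIntegrandRadialDeriv p q r t - r * divergence p q (quarterArc r t)) t := by
  have hγ := hasDerivAt_quarterArc_angle r t
  have hqγ := (hq.differentiable one_ne_zero _).hasFDerivAt.comp_hasDerivAt t hγ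
  have hpγ := (hp.differentiable one_ne_zero _).hasFDerivAt.comp_hasDerivAt t hγ
  refine ((hqγ.mul (hasDerivAt_sin t)).sub (hpγ.mul (hasDerivAt_cos t))).congr_deriv ?_
  simp only [arcIntegrandRadialDeriv, divergence, ContinuousLinearMap.map_pair _ (sin t),
    ContinuousLinearMap.map_pair _ (r * cos t), smul_eq_mul, Function.comp_apply]
  linear_combination -(r * (fderiv ℝ p (quarterArc r t) (1, 0)
    + fderiv ℝ q (quarterArc r t) (0, 1))) * sin_sq_add_cos_sq t

lemma continuous_arcIntegrandRadialDeriv :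
    Continuous (Function.uncurry (arcIntegrandRadialDeriv p q)) := by
  have hγ := continuous_quarterArc
  have hDp := (hp.continuous_fderiv one_ne_zero).comp hγ
  have hDq := (hq.continuous_fderiv one_ne_zero).comp hγ
  have hpγ := hp.continuous.comp hγ
  have hqγ := hq.continuous.comp hγ
  unfold arcIntegrandRadialDeriv Function.uncurry at *
  fun_prop

lemma continuous_divergence : Continuous (divergence p q) := by
  have := hp.continuous_fderiv one_ne_zero
  have := hq.continuous_fderiv one_ne_zero
  unfold divergence
  fun_prop

lemma integral_arcIntegrandRadialDeriv (r a b : ℝ) :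
    ∫ t in a..b, arcIntegrandRadialDeriv p q r t
      = r * (∫ t in a..b, divergence p q (quarterArc r t))
        + (arcEndpointTerm p q r b - arcEndpointTerm p q r a) := by
  have hD : Continuous (arcIntegrandRadialDeriv p q r) :=
    (continuous_arcIntegrandRadialDeriv hp hq).comp (Continuous.prodMk_right r)
  have hdiv : Continuous fun t => r * divergence p q (quarterArc r t) :=
    continuous_const.mul ((continuous_divergence hp hq).comp
      (continuous_quarterArc.comp (Continuous.prodMk_right r)))
  have hftc := intervalIntegral.integral_eq_sub_of_hasDerivAt
    (fun t _ => hasDerivAt_arcEndpointTerm_angle hp hq r t)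
    ((hD.sub hdiv).intervalIntegrable a b)
  rwa [intervalIntegral.integral_sub (hD.intervalIntegrable _ _) (hdiv.intervalIntegrable _ _),
    intervalIntegral.integral_const_mul, sub_eq_iff_eq_add'] at hftc

lemma hasDerivAt_integral_arcIntegrand (r : ℝ) :
    HasDerivAt (fun r => ∫ t in (0)..(π / 2), arcIntegrand p q r t)
      (r * (∫ t in (0)..(π / 2), divergence p q (quarterArc r t)) + (q (r, 0) + p (0, r)))
      r := by
  have hendpoints :
      arcEndpointTerm p q r (π / 2) - arcEndpointTerm p q r 0 = q (r, 0) + p (0, r) := by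
    simp [arcEndpointTerm, quarterArc]
  rw [← hendpoints, ← integral_arcIntegrandRadialDeriv hp hq]
  refine hasDerivAt_intervalIntegral_of_continuous_deriv (fun r => ?_)
    (continuous_arcIntegrandRadialDeriv hp hq) (hasDerivAt_arcIntegrand_radius hp hq) r
  have := hp.continuous
  have := hq.continuous
  unfold arcIntegrand quarterArc
  fun_prop

end

end

/-- Lemma A.1, first identity: with `Γ_h` the clockwise first-quadrant
quarter arc of `x² + y² = 2h`, `A₁(h) = (0, a₁(h))`, `A₂(h) = (a₂(h), 0)`,
`a₁(h) = a₂(h) = √(2h)` C¹ in `h` on the open interval `J`, and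
`M₁(h) = ∫_{Γ_h} q dx − p dy`, one has
`M₁'(h) = ∫_{Γ_h} (p_x + q_y) dt + p(0,a₁(h)) a₁'(h) + q(a₂(h),0) a₂'(h)`. -/
theorem melnikov_derivative_formula
    (p q : ℝ × ℝ → ℝ) (hp : ContDiff ℝ 1 p) (hq : ContDiff ℝ 1 q)
    (J : Set ℝ) (hJ : ∃ a b : ℝ, J = Set.Ioo a b) (hJpos : ∀ h ∈ J, 0 < h)
    (a₁ a₂ a₁' a₂' : ℝ → ℝ)
    (ha₁ : ∀ h ∈ J, a₁ h = Real.sqrt (2*h)) (ha₂ : ∀ h ∈ J, a₂ h = Real.sqrt (2*h))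
    (hd₁ : ∀ h ∈ J, HasDerivAt a₁ (a₁' h) h) (hd₂ : ∀ h ∈ J, HasDerivAt a₂ (a₂' h) h)
    (M₁ : ℝ → ℝ)
    (hM₁ : ∀ h : ℝ, M₁ h = ∫ t in (0:ℝ)..(π/2),
      (q (Real.sqrt (2*h) * Real.sin t, Real.sqrt (2*h) * Real.cos t) *
          (Real.sqrt (2*h) * Real.cos t)
        - p (Real.sqrt (2*h) * Real.sin t, Real.sqrt (2*h) * Real.cos t) *
          (-(Real.sqrt (2*h) * Real.sin t)))) :
    ∀ h ∈ J, HasDerivAt M₁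
      ((∫ t in (0:ℝ)..(π/2),
          (fderiv ℝ p (Real.sqrt (2*h) * Real.sin t, Real.sqrt (2*h) * Real.cos t) (1, 0)
           + fderiv ℝ q (Real.sqrt (2*h) * Real.sin t, Real.sqrt (2*h) * Real.cos t) (0, 1)))
        + p (0, a₁ h) * a₁' h + q (a₂ h, 0) * a₂' h) h := by
  obtain ⟨A, B, rfl⟩ := hJ
  intro h hh
  have hR0 : √(2 * h) ≠ 0 := by have := hJpos h hh; positivity
  have hR := hasDerivAt_sqrt_two_mul (hJpos h hh)
  have hJnhds := isOpen_Ioo.mem_nhds hh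
  have ha₁' : a₁' h = (√(2 * h))⁻¹ :=
    (hd₁ h hh).unique (hR.congr_of_eventuallyEq (Filter.eventuallyEq_of_mem hJnhds ha₁))
  have ha₂' : a₂' h = (√(2 * h))⁻¹ :=
    (hd₂ h hh).unique (hR.congr_of_eventuallyEq (Filter.eventuallyEq_of_mem hJnhds ha₂))
  have hM : M₁ = (fun r => ∫ t in (0)..(π / 2), arcIntegrand p q r t) ∘ fun x => √(2 * x) :=
    funext hM₁
  rw [hM]
  refine ((hasDerivAt_integral_arcIntegrand hp hq _).comp h hR).congr_deriv ?_
  rw [ha₁ h hh, ha₂ h hh, ha₁', ha₂']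
  simp only [divergence, quarterArc]
  field_simp
  ring
end

section
/- Let g : ℝ² → ℝ be continuous, let h > 0, and define R(x, y) = ∫₀^y g(x, s) ds. Define M̄(h) = ∫_{Γ_h} R(x, y) dx and M(h) = ∫_{Γ_h} g(x, y) dt, where Γ_h is the clockwise first-quadrant quarter arc of x² + y² = 2h, parametrized by time (ẋ = y, ẏ = −x). If g is C¹, then M(h) = dM̄/dh. -/
open Real

/-!
Put `r = √(2h)`, `c(r, t) = (r sin t, r cos t)` and `Φ(r) = ∫₀^{π/2} R(c) r cos t dt`, so that
`M̄(h) = Φ(√(2h))`. Since `r cos t · ∂ᵣc - sin t · ∂ₜc = (0, r)`, the `r`-derivative of the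
integrand is `r ∂_y R(c) + ∂ₜ(sin t · R(c))`. The second term integrates to `R(r, 0) = 0` and
`∂_y R = g`, so `Φ'(r) = r M`, and the chain rule with `d√(2h)/dh = 1/√(2h)` gives `M̄' = M`.
That `R` is `C¹` follows by differentiating `R(x, y) = ∫₀¹ y g(x, u y) du` under the integral sign.
-/

open MeasureTheory Function Metric Set

section Leibniz

variable {H E : Type*} [NormedAddCommGroup H] [NormedSpace ℝ H]
  [NormedAddCommGroup E] [NormedSpace ℝ E] {F : H → ℝ → E}

theorem hasFDerivAt_partial_of_contDiff (hF : ContDiff ℝ 1 (uncurry F)) (x : H) (t : ℝ) :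
    HasFDerivAt (F · t)
      ((fderiv ℝ (uncurry F) (x, t)).comp (ContinuousLinearMap.inl ℝ H ℝ)) x :=
  (hF.differentiable one_ne_zero (x, t)).hasFDerivAt.comp (f := fun y => (y, t)) x
    (hasFDerivAt_prodMk_left x t)

theorem continuous_fderiv_partial_of_contDiff (hF : ContDiff ℝ 1 (uncurry F)) :
    Continuous (uncurry fun x t => fderiv ℝ (F · t) x) := by
  have hpartial : (uncurry fun x t => fderiv ℝ (F · t) x) =
      fun z => (fderiv ℝ (uncurry F) z).comp (ContinuousLinearMap.inl ℝ H ℝ) :=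
    funext fun z => (hasFDerivAt_partial_of_contDiff hF z.1 z.2).fderiv
  rw [hpartial]
  exact (hF.continuous_fderiv one_ne_zero).clm_comp continuous_const

variable [ProperSpace H]

theorem hasFDerivAt_intervalIntegral_of_contDiff (hF : ContDiff ℝ 1 (uncurry F))
    (a b : ℝ) (x₀ : H) :
    HasFDerivAt (fun x => ∫ t in a..b, F x t) (∫ t in a..b, fderiv ℝ (F · t) x₀) x₀ := by
  have hF' := continuous_fderiv_partial_of_contDiff hF
  obtain ⟨C, hC⟩ := ((isCompact_closedBall x₀ 1).prod (isCompact_uIcc (a := a) (b := b))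
    ).exists_bound_of_continuousOn hF'.continuousOn
  refine intervalIntegral.hasFDerivAt_integral_of_dominated_of_fderiv_le (bound := fun _ => C)
    (ball_mem_nhds x₀ one_pos)
    (.of_forall fun x => (hF.continuous.uncurry_left x).aestronglyMeasurable)
    ((hF.continuous.uncurry_left x₀).intervalIntegrable a b)
    (hF'.uncurry_left x₀).aestronglyMeasurable
    (.of_forall fun t ht x hx => hC (x, t) ⟨ball_subset_closedBall hx, uIoc_subset_uIcc ht⟩)
    intervalIntegrable_const
    (.of_forall fun t _ x _ =>
      (hasFDerivAt_partial_of_contDiff hF x t).differentiableAt.hasFDerivAt)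

theorem contDiff_one_intervalIntegral (hF : ContDiff ℝ 1 (uncurry F)) (a b : ℝ) :
    ContDiff ℝ 1 fun x => ∫ t in a..b, F x t := by
  rw [contDiff_one_iff_fderiv]
  refine ⟨fun x => (hasFDerivAt_intervalIntegral_of_contDiff hF a b x).differentiableAt, ?_⟩
  rw [funext fun x => (hasFDerivAt_intervalIntegral_of_contDiff hF a b x).fderiv]
  exact intervalIntegral.continuous_parametric_intervalIntegral_of_continuous'
    (continuous_fderiv_partial_of_contDiff hF) a b

end Leibniz

theorem hasDerivAt_intervalIntegral_of_contDiff {E : Type*} [NormedAddCommGroup E]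
    [NormedSpace ℝ E] {F : ℝ → ℝ → E} (hF : ContDiff ℝ 1 (uncurry F)) (a b x₀ : ℝ) :
    HasDerivAt (fun x => ∫ t in a..b, F x t) (∫ t in a..b, deriv (F · t) x₀) x₀ := by
  have h := (hasFDerivAt_intervalIntegral_of_contDiff hF a b x₀).hasDerivAt
  rwa [ContinuousLinearMap.intervalIntegral_apply
    (((continuous_fderiv_partial_of_contDiff hF).uncurry_left x₀).intervalIntegrable a b),
    funext fun t => fderiv_apply_one_eq_deriv (f := (F · t))] at h

section ParametricPrimitive

variable {H E : Type*} [NormedAddCommGroup H] [NormedSpace ℝ H]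
  [NormedAddCommGroup E] [NormedSpace ℝ E] {f : H → ℝ → E}

theorem contDiff_one_parametric_primitive [ProperSpace H] (hf : ContDiff ℝ 1 (uncurry f)) :
    ContDiff ℝ 1 fun p : H × ℝ => ∫ t in 0..p.2, f p.1 t := by
  have hsubst : (fun p : H × ℝ => ∫ t in 0..p.2, f p.1 t) =
      fun p => ∫ u in 0..1, p.2 • f p.1 (u * p.2) := by
    funext p
    rw [intervalIntegral.integral_smul, intervalIntegral.smul_integral_comp_mul_right, zero_mul,
      one_mul]
  rw [hsubst]
  apply contDiff_one_intervalIntegral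
  change ContDiff ℝ 1 fun z : (H × ℝ) × ℝ => z.1.2 • uncurry f (z.1.1, z.2 * z.1.2)
  fun_prop

theorem fderiv_parametric_primitive_apply_zero_one [CompleteSpace E]
    (hf : Continuous (uncurry f)) {p : H × ℝ}
    (hd : DifferentiableAt ℝ (fun p : H × ℝ => ∫ t in 0..p.2, f p.1 t) p) :
    fderiv ℝ (fun p : H × ℝ => ∫ t in 0..p.2, f p.1 t) p (0, 1) = f p.1 p.2 := by
  have hline : HasDerivAt (fun y : ℝ => ((p.1, y) : H × ℝ)) (0, 1) p.2 :=
    (hasDerivAt_const _ _).prodMk (hasDerivAt_id _)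
  exact (hd.hasFDerivAt.comp_hasDerivAt (f := fun y : ℝ => ((p.1, y) : H × ℝ)) p.2 hline).unique
    ((hf.uncurry_left p.1).integral_hasStrictDerivAt 0 p.2).hasDerivAt

end ParametricPrimitive

theorem deriv_quarterArc_integrand {R : ℝ × ℝ → ℝ} (hR : Differentiable ℝ R) (r t : ℝ) :
    deriv (fun r => R (r * sin t, r * cos t) * (r * cos t)) r =
      r * fderiv ℝ R (r * sin t, r * cos t) (0, 1) +
        deriv (fun t => sin t * R (r * sin t, r * cos t)) t := by
  set L := fderiv ℝ R (r * sin t, r * cos t)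
  have hradial : HasDerivAt (fun r => R (r * sin t, r * cos t) * (r * cos t))
      (L (sin t, cos t) * (r * cos t) + R (r * sin t, r * cos t) * cos t) r :=
    ((hR _).hasFDerivAt.comp_hasDerivAt r
      ((hasDerivAt_mul_const _).prodMk (hasDerivAt_mul_const _))).mul (hasDerivAt_mul_const _)
  have hangular : HasDerivAt (fun t => sin t * R (r * sin t, r * cos t))
      (cos t * R (r * sin t, r * cos t) + sin t * L (r * cos t, r * -sin t)) t :=
    (hasDerivAt_sin t).mul ((hR _).hasFDerivAt.comp_hasDerivAt t
      (((hasDerivAt_sin t).const_mul r).prodMk ((hasDerivAt_cos t).const_mul r)))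
  have hvec : (r * cos t) • ((sin t, cos t) : ℝ × ℝ) - sin t • (r * cos t, r * -sin t) =
      r • ((0, 1) : ℝ × ℝ) := by
    ext
    · simp only [Prod.fst_sub, Prod.smul_fst, smul_eq_mul]; ring
    · simp only [Prod.snd_sub, Prod.smul_snd, smul_eq_mul]
      linear_combination r * sin_sq_add_cos_sq t
  have hlin := congrArg L hvec
  simp only [map_sub, map_smul, smul_eq_mul] at hlin
  rw [hradial.deriv, hangular.deriv]
  linear_combination hlin

theorem hasDerivAt_quarterArc_integral {R : ℝ × ℝ → ℝ} (hR : ContDiff ℝ 1 R)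
    (hR0 : ∀ x, R (x, 0) = 0) (r : ℝ) :
    HasDerivAt (fun r => ∫ t in 0..π/2, R (r * sin t, r * cos t) * (r * cos t))
      (r * ∫ t in 0..π/2, fderiv ℝ R (r * sin t, r * cos t) (0, 1)) r := by
  have hDR : Continuous (fderiv ℝ R) := hR.continuous_fderiv one_ne_zero
  have hF : ContDiff ℝ 1 (uncurry fun r t => R (r * sin t, r * cos t) * (r * cos t)) := by
    change ContDiff ℝ 1 fun z : ℝ × ℝ => R (z.1 * sin z.2, z.1 * cos z.2) * (z.1 * cos z.2)
    fun_prop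
  have hB : ContDiff ℝ 1 fun t => sin t * R (r * sin t, r * cos t) := by fun_prop
  have hB'int : IntervalIntegrable (deriv fun t => sin t * R (r * sin t, r * cos t)) volume 0
      (π/2) := (hB.continuous_deriv le_rfl).intervalIntegrable _ _
  refine (hasDerivAt_intervalIntegral_of_contDiff hF 0 (π/2) r).congr_deriv ?_
  rw [intervalIntegral.integral_congr fun t _ =>
      deriv_quarterArc_integrand (hR.differentiable one_ne_zero) r t,
    intervalIntegral.integral_add, intervalIntegral.integral_const_mul,
    intervalIntegral.integral_deriv_eq_sub
      (fun t _ => (hB.differentiable one_ne_zero).differentiableAt) hB'int]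
  · simp [hR0]
  · exact Continuous.intervalIntegrable (by fun_prop) _ _
  · exact hB'int

theorem time_integral_is_derivative_of_line_integral_general
    (g : ℝ × ℝ → ℝ) (hg : ContDiff ℝ 1 g)
    (h : ℝ) (hh : 0 < h)
    (R : ℝ × ℝ → ℝ) (hR : ∀ x y : ℝ, R (x, y) = ∫ s in (0:ℝ)..y, g (x, s))
    (Mbar M : ℝ → ℝ)
    (hMbar : ∀ h' : ℝ, Mbar h' = ∫ t in (0:ℝ)..(π/2),
      R (Real.sqrt (2*h') * Real.sin t, Real.sqrt (2*h') * Real.cos t) *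
        (Real.sqrt (2*h') * Real.cos t))
    (hM : ∀ h' : ℝ, M h' = ∫ t in (0:ℝ)..(π/2),
      g (Real.sqrt (2*h') * Real.sin t, Real.sqrt (2*h') * Real.cos t)) :
    HasDerivAt Mbar (M h) h := by
  have hReq : R = fun p : ℝ × ℝ => ∫ s in 0..p.2, g (p.1, s) := funext fun p => hR p.1 p.2
  have hRC : ContDiff ℝ 1 R :=
    hReq ▸ contDiff_one_parametric_primitive (f := fun x s => g (x, s)) hg
  have hRy : ∀ p, fderiv ℝ R p (0, 1) = g p := fun p => by
    subst hReq
    exact fderiv_parametric_primitive_apply_zero_one (f := fun x s => g (x, s)) hg.continuous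
      (hRC.differentiable one_ne_zero p)
  have hR0 : ∀ x, R (x, 0) = 0 := fun x => by simp [hR]
  have hsqrt : HasDerivAt (fun h => √(2 * h)) (2 * 1 / (2 * √(2 * h))) h :=
    ((hasDerivAt_id' h).const_mul 2).sqrt (by positivity)
  have hcomp := (hasDerivAt_quarterArc_integral hRC hR0 (√(2 * h))).comp h hsqrt
  rw [funext hMbar, hM]
  refine hcomp.congr_deriv ?_
  simp only [hRy]
  field_simp

/-- Lemma 2.1 in the plane: with `Γ_h` the clockwise first-quadrant quarter
arc of `x² + y² = 2h`, `R(x,y) = ∫₀^y g(x,s) ds`, `M̄(h) = ∫_{Γ_h} R dx` and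
`M(h) = ∫_{Γ_h} g dt`, if `g` is C¹ then `M(h) = dM̄/dh`. -/
theorem time_integral_is_derivative_of_line_integral
    (g : ℝ × ℝ → ℝ) (hgc : Continuous g) (hg : ContDiff ℝ 1 g)
    (h : ℝ) (hh : 0 < h)
    (R : ℝ × ℝ → ℝ) (hR : ∀ x y : ℝ, R (x, y) = ∫ s in (0:ℝ)..y, g (x, s))
    (Mbar M : ℝ → ℝ)
    (hMbar : ∀ h' : ℝ, Mbar h' = ∫ t in (0:ℝ)..(π/2),
      R (Real.sqrt (2*h') * Real.sin t, Real.sqrt (2*h') * Real.cos t) *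
        (Real.sqrt (2*h') * Real.cos t))
    (hM : ∀ h' : ℝ, M h' = ∫ t in (0:ℝ)..(π/2),
      g (Real.sqrt (2*h') * Real.sin t, Real.sqrt (2*h') * Real.cos t)) :
    HasDerivAt Mbar (M h) h :=
  time_integral_is_derivative_of_line_integral_general g hg h hh R hR Mbar M hMbar hM
end
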